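/- Let A ∈ M_n(𝕋) be strongly irreducible (A^(k) is irreducible for every k ≥ 1) and robust. Then the tropical matrix exponential e^(A) is robust. -/

import Mathlib

noncomputable section

/-- Max-plus (tropical) matrix product over `𝕋 = ℝ ∪ {−∞}`, embedded in `EReal`. -/
def mpMul {ι κ μ : Type*} (A : Matrix ι κ EReal) (B : Matrix κ μ EReal) :
    Matrix ι μ EReal :=
  fun i j => ⨆ k, A i k + B k j

/-- Max-plus identity matrix. -/
def mpId {ι : Type*} [DecidableEq ι] : Matrix ι ι EReal :=
  fun i j => if i = j then (0 : EReal) else ⊥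

/-- Max-plus matrix power, `mpPow A 0 = mpId`. -/
def mpPow {ι : Type*} [DecidableEq ι] (A : Matrix ι ι EReal) : ℕ → Matrix ι ι EReal
  | 0 => mpId
  | k + 1 => mpMul (mpPow A k) A

/-- Tropical scalar multiple: add the real scalar `c` to every entry. -/
def smulE {ι κ : Type*} (c : ℝ) (A : Matrix ι κ EReal) : Matrix ι κ EReal :=
  fun i j => (c : EReal) + A i j

/-- Max-plus matrix-vector product. -/
def mpMulVec {ι κ : Type*} (A : Matrix ι κ EReal) (x : κ → EReal) : ι → EReal :=
  fun i => ⨆ j, A i j + x j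

/-- The tropical factorial `k! = 1 ⊗ 2 ⊗ ⋯ ⊗ k = k(k+1)/2`. -/
def tfact (k : ℕ) : ℝ := k * (k + 1) / 2

/-- The tropical matrix exponential `e^(A) = ⨁_{k ≥ 0} (−k(k+1)/2) ⊗ A^(k)`. -/
def mexp {ι : Type*} [DecidableEq ι] (A : Matrix ι ι EReal) : Matrix ι ι EReal :=
  fun i j => ⨆ k : ℕ, (((-(tfact k) : ℝ) : EReal) + mpPow A k i j)

/-- The scalar tropical exponential `E(a) = sup_k (k·a − k(k+1)/2)`. -/
def Escalar (a : ℝ) : ℝ := ⨆ k : ℕ, ((k : ℝ) * a - tfact k)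

/-- Irreducibility: the digraph of `A` is strongly connected. -/
def mpIrreducible {ι : Type*} (A : Matrix ι ι EReal) : Prop :=
  ∀ i j, Relation.TransGen (fun u v => A u v ≠ ⊥) i j

/-- Robustness: the orbit of every nonzero vector over `𝕋` hits an eigenvector. -/
def mpRobust {n : ℕ} (A : Matrix (Fin n) (Fin n) EReal) : Prop :=
  ∀ x : Fin n → EReal, (∀ i, x i ≠ ⊤) → x ≠ (fun _ => ⊥) →
    ∃ (r : ℕ) (lam : ℝ),
      mpMulVec (mpPow A r) x ≠ (fun _ => ⊥) ∧
      mpMulVec A (mpMulVec (mpPow A r) x) =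
        fun i => (lam : EReal) + mpMulVec (mpPow A r) x i

/-- The weight of the closed walk `c 0 → c 1 → ⋯ → c m → c 0`. -/
def cycWeight {ι : Type*} {m : ℕ} (A : Matrix ι ι EReal) (c : Fin (m + 1) → ι) : EReal :=
  ∑ i : Fin (m + 1), A (c i) (c (i + 1))

/-- `c` is a cycle (closed walk) in the digraph of `A`. -/
def isCycle {ι : Type*} {m : ℕ} (A : Matrix ι ι EReal) (c : Fin (m + 1) → ι) : Prop :=
  ∀ i, A (c i) (c (i + 1)) ≠ ⊥

/-- `lam` is the maximum cycle mean `λ(A)`: attained by some cycle and an upper bound. -/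
def isMaxCycleMean {ι : Type*} (A : Matrix ι ι EReal) (lam : ℝ) : Prop :=
  (∃ (m : ℕ) (c : Fin (m + 1) → ι), isCycle A c ∧
      cycWeight A c = ((((m : ℝ) + 1) * lam : ℝ) : EReal)) ∧
  ∀ (m : ℕ) (c : Fin (m + 1) → ι), isCycle A c →
      cycWeight A c ≤ ((((m : ℝ) + 1) * lam : ℝ) : EReal)

/-- A critical cycle: a cycle whose mean equals `lam = λ(A)`. -/
def isCritCycle {ι : Type*} {m : ℕ} (A : Matrix ι ι EReal) (lam : ℝ)
    (c : Fin (m + 1) → ι) : Prop :=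
  isCycle A c ∧ cycWeight A c = ((((m : ℝ) + 1) * lam : ℝ) : EReal)

/-- `v` is a vertex of the critical digraph `C(A)`. -/
def critVertex {ι : Type*} (A : Matrix ι ι EReal) (lam : ℝ) (v : ι) : Prop :=
  ∃ (m : ℕ) (c : Fin (m + 1) → ι) (k : Fin (m + 1)), isCritCycle A lam c ∧ c k = v

/-- `u → v` is an edge of the critical digraph `C(A)`. -/
def critEdge {ι : Type*} (A : Matrix ι ι EReal) (lam : ℝ) (u v : ι) : Prop :=
  ∃ (m : ℕ) (c : Fin (m + 1) → ι) (k : Fin (m + 1)),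
    isCritCycle A lam c ∧ c k = u ∧ c (k + 1) = v

/-- `u` and `v` lie in the same strongly connected component of `C(A)`. -/
def sameCritSCC {ι : Type*} (A : Matrix ι ι EReal) (lam : ℝ) (u v : ι) : Prop :=
  Relation.ReflTransGen (critEdge A lam) u v ∧ Relation.ReflTransGen (critEdge A lam) v u



private lemma ereal_add_right_cancel (x : EReal) (b : ℝ) : x + b + (-b : ℝ) = x := by
  induction x with
  | bot => rw [EReal.bot_add, EReal.bot_add]
  | coe r => rw [← EReal.coe_add, ← EReal.coe_add]; norm_num
  | top => rw [EReal.top_add_coe, EReal.top_add_coe]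

private lemma ereal_iSup_add {ι : Sort*} [Nonempty ι] (f : ι → EReal) (b : EReal) :
    (⨆ i, f i) + b = ⨆ i, f i + b := by
  induction b with
  | bot => simp [EReal.add_bot]
  | coe r =>
    apply le_antisymm
    · have h1 : (⨆ i, f i) ≤ (⨆ i, f i + (r : EReal)) + ((-r : ℝ) : EReal) := by
        apply iSup_le; intro i
        calc f i = f i + (r : EReal) + ((-r : ℝ) : EReal) := (ereal_add_right_cancel _ _).symm
        _ ≤ (⨆ i, f i + (r : EReal)) + ((-r : ℝ) : EReal) :=
            add_le_add_left (le_iSup (fun i => f i + (r : EReal)) i) _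
      calc (⨆ i, f i) + (r : EReal)
          ≤ (⨆ i, f i + (r : EReal)) + ((-r : ℝ) : EReal) + (r : EReal) :=
            add_le_add_left h1 _
        _ = (⨆ i, f i + (r : EReal)) := by
            have := ereal_add_right_cancel (⨆ i, f i + (r : EReal)) (-r)
            simpa using this
    · exact iSup_le fun i => add_le_add_left (le_iSup f i) _
  | top =>
    rcases eq_or_ne (⨆ i, f i) ⊥ with h | h
    · have hall : ∀ i, f i = ⊥ := fun i => le_bot_iff.1 (h ▸ le_iSup f i)
      simp [h, hall, EReal.bot_add]
    · rw [EReal.add_top_of_ne_bot h, eq_comm, ← top_le_iff]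
      have h2 : ∃ i, f i ≠ ⊥ := by
        by_contra hc; push_neg at hc
        exact h (le_bot_iff.1 (iSup_le fun i => le_of_eq (hc i)))
      obtain ⟨i, hi⟩ := h2
      exact le_iSup_of_le i (by rw [EReal.add_top_of_ne_bot hi])

private lemma ereal_add_iSup {ι : Sort*} [Nonempty ι] (f : ι → EReal) (b : EReal) :
    b + (⨆ i, f i) = ⨆ i, b + f i := by
  rw [add_comm, ereal_iSup_add]; simp_rw [add_comm]

private lemma ereal_iSup_add_fin {n : ℕ} (f : Fin n → EReal) (b : EReal) :
    (⨆ i, f i) + b = ⨆ i, f i + b := by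
  rcases Nat.eq_zero_or_pos n with h | h
  · subst h; simp [iSup_of_empty, EReal.bot_add]
  · have : Nonempty (Fin n) := ⟨⟨0, h⟩⟩
    exact ereal_iSup_add f b

private lemma ereal_add_iSup_fin {n : ℕ} (f : Fin n → EReal) (b : EReal) :
    b + (⨆ i, f i) = ⨆ i, b + f i := by
  rw [add_comm, ereal_iSup_add_fin]; simp_rw [add_comm]

private lemma ereal_fin_sup_ne_top {ι : Type*} [Finite ι] (f : ι → EReal)
    (h : ∀ i, f i ≠ ⊤) : (⨆ i, f i) ≠ ⊤ := by
  cases isEmpty_or_nonempty ι with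
  | inl he => simp [iSup_of_empty]
  | inr hne =>
    obtain ⟨i₀, hi₀⟩ := Finite.exists_max (β := EReal) f
    exact ne_top_of_le_ne_top (h i₀) (iSup_le hi₀)


private lemma ereal_exists_real_bound {ι : Type*} [Finite ι] (f : ι → EReal)
    (h : ∀ i, f i ≠ ⊤) : ∃ c : ℝ, ∀ i, f i ≤ (c : EReal) := by
  have hnt := ereal_fin_sup_ne_top f h
  have hle : ∀ i, f i ≤ ⨆ j, f j := fun i => le_iSup f i
  rcases eq_or_ne (⨆ i, f i) ⊥ with hb | hb
  · exact ⟨0, fun i => le_trans (hb ▸ hle i) bot_le⟩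
  · refine ⟨(⨆ i, f i).toReal, fun i => ?_⟩
    rw [EReal.coe_toReal hnt hb]
    exact hle i

private lemma ereal_coe_iSup_of_bdd (g : ℕ → ℝ) (hb : BddAbove (Set.range g)) :
    (⨆ k, ((g k : EReal))) = (((⨆ k, g k : ℝ)) : EReal) := by
  apply le_antisymm
  · exact iSup_le fun k => EReal.coe_le_coe_iff.2 (le_ciSup hb k)
  · apply le_of_forall_lt
    intro c hc
    induction c with
    | bot => exact lt_of_lt_of_le (EReal.bot_lt_coe (g 0)) (le_iSup (fun k => ((g k : EReal))) 0)
    | coe q =>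
      have hq : q < ⨆ k, g k := EReal.coe_lt_coe_iff.1 hc
      obtain ⟨k, hk⟩ := exists_lt_of_lt_ciSup hq
      exact lt_of_lt_of_le (EReal.coe_lt_coe_iff.2 hk) (le_iSup (fun k => ((g k : EReal))) k)
    | top => exact absurd hc (by simp)

section MP
variable {n : ℕ}

private lemma mpMulVec_mono {A : Matrix (Fin n) (Fin n) EReal} {u w : Fin n → EReal}
    (h : ∀ j, u j ≤ w j) : ∀ i, mpMulVec A u i ≤ mpMulVec A w i := fun i =>
  iSup_mono fun j => add_le_add_right (h j) _

private lemma mpMulVec_smul (A : Matrix (Fin n) (Fin n) EReal) (c : EReal)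
    (z : Fin n → EReal) (i : Fin n) :
    mpMulVec A (fun j => c + z j) i = c + mpMulVec A z i := by
  show (⨆ j, A i j + (c + z j)) = c + ⨆ j, A i j + z j
  rw [ereal_add_iSup_fin]
  exact iSup_congr fun j => by rw [add_left_comm]

private lemma mpMulVec_id (z : Fin n → EReal) : mpMulVec (mpId (ι := Fin n)) z = z := by
  funext i
  apply le_antisymm
  · apply iSup_le; intro j
    unfold mpId
    rcases eq_or_ne i j with h | h
    · simp [h]
    · simp [h, EReal.bot_add]
  · exact le_iSup_of_le i (by simp [mpId])

private lemma mpMul_id_left (A : Matrix (Fin n) (Fin n) EReal) :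
    mpMul (mpId (ι := Fin n)) A = A := by
  funext i j
  apply le_antisymm
  · apply iSup_le; intro k
    unfold mpId
    rcases eq_or_ne i k with h | h
    · simp [h]
    · simp [h, EReal.bot_add]
  · exact le_iSup_of_le i (by simp [mpId])

private lemma mpMul_id_right (A : Matrix (Fin n) (Fin n) EReal) :
    mpMul A (mpId (ι := Fin n)) = A := by
  funext i j
  apply le_antisymm
  · apply iSup_le; intro k
    unfold mpId
    rcases eq_or_ne k j with h | h
    · simp [h]
    · simp [h, EReal.add_bot]
  · exact le_iSup_of_le j (by simp [mpId])

private lemma mpMulVec_assoc (X Y : Matrix (Fin n) (Fin n) EReal) (z : Fin n → EReal) :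
    mpMulVec (mpMul X Y) z = mpMulVec X (mpMulVec Y z) := by
  funext i
  unfold mpMulVec mpMul
  calc (⨆ j, (⨆ k, X i k + Y k j) + z j)
      = ⨆ j, ⨆ k, (X i k + (Y k j + z j)) := by
        refine iSup_congr fun j => ?_
        rw [ereal_iSup_add_fin]
        exact iSup_congr fun k => by rw [add_assoc]
    _ = ⨆ k, ⨆ j, (X i k + (Y k j + z j)) := iSup_comm
    _ = ⨆ k, X i k + ⨆ j, (Y k j + z j) := iSup_congr fun k => (ereal_add_iSup_fin _ _).symm

private lemma mpMul_assoc (X Y Z : Matrix (Fin n) (Fin n) EReal) :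
    mpMul (mpMul X Y) Z = mpMul X (mpMul Y Z) := by
  funext i l
  show (⨆ j, (⨆ k, X i k + Y k j) + Z j l) = ⨆ k, X i k + ⨆ j, (Y k j + Z j l)
  calc (⨆ j, (⨆ k, X i k + Y k j) + Z j l)
      = ⨆ j, ⨆ k, (X i k + (Y k j + Z j l)) := by
        refine iSup_congr fun j => ?_
        rw [ereal_iSup_add_fin]
        exact iSup_congr fun k => by rw [add_assoc]
    _ = ⨆ k, ⨆ j, (X i k + (Y k j + Z j l)) := iSup_comm
    _ = ⨆ k, X i k + ⨆ j, (Y k j + Z j l) := iSup_congr fun k => (ereal_add_iSup_fin _ _).symm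

private lemma mpPow_succ' (A : Matrix (Fin n) (Fin n) EReal) (r : ℕ) :
    mpPow A (r + 1) = mpMul A (mpPow A r) := by
  induction r with
  | zero => show mpMul (mpId) A = mpMul A (mpId); rw [mpMul_id_left, mpMul_id_right]
  | succ r ih =>
    show mpMul (mpPow A (r + 1)) A = mpMul A (mpMul (mpPow A r) A)
    rw [ih, mpMul_assoc]

private lemma mpPow_add (A : Matrix (Fin n) (Fin n) EReal) (m k : ℕ) :
    mpPow A (m + k) = mpMul (mpPow A m) (mpPow A k) := by
  induction k with
  | zero => show mpPow A m = mpMul (mpPow A m) mpId; rw [mpMul_id_right]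
  | succ k ih =>
    show mpMul (mpPow A (m + k)) A = mpMul (mpPow A m) (mpMul (mpPow A k) A)
    rw [ih, mpMul_assoc]

private lemma mpPow_one (A : Matrix (Fin n) (Fin n) EReal) : mpPow A 1 = A := by
  show mpMul mpId A = A; exact mpMul_id_left A

private lemma mpPowVec_succ' (A : Matrix (Fin n) (Fin n) EReal) (r : ℕ) (x : Fin n → EReal) :
    mpMulVec (mpPow A (r + 1)) x = mpMulVec A (mpMulVec (mpPow A r) x) := by
  rw [mpPow_succ', mpMulVec_assoc]

private lemma mpPowVec_add (A : Matrix (Fin n) (Fin n) EReal) (m k : ℕ) (x : Fin n → EReal) :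
    mpMulVec (mpPow A (m + k)) x = mpMulVec (mpPow A m) (mpMulVec (mpPow A k) x) := by
  rw [mpPow_add, mpMulVec_assoc]

private lemma tfact_zero : tfact 0 = 0 := by simp [tfact]

private lemma tfact_one : tfact 1 = 1 := by norm_num [tfact]

private lemma tfact_ge (k : ℕ) : (k : ℝ) ≤ tfact k := by
  unfold tfact
  rcases Nat.eq_zero_or_pos k with h | h
  · simp [h]
  · have h1 : (1:ℝ) ≤ k := by exact_mod_cast h
    nlinarith

/-- expansion of `mexp A ⊗ z`. -/
private lemma mexp_mulVec (A : Matrix (Fin n) (Fin n) EReal) (z : Fin n → EReal) (i : Fin n) :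
    mpMulVec (mexp A) z i = ⨆ k : ℕ, (((-(tfact k) : ℝ) : EReal) + mpMulVec (mpPow A k) z i) := by
  unfold mpMulVec mexp
  calc (⨆ j, (⨆ k : ℕ, (((-(tfact k) : ℝ) : EReal) + mpPow A k i j)) + z j)
      = ⨆ j, ⨆ k : ℕ, ((((-(tfact k) : ℝ) : EReal) + (mpPow A k i j + z j))) := by
        refine iSup_congr fun j => ?_
        rw [ereal_iSup_add]
        exact iSup_congr fun k => by rw [add_assoc]
    _ = ⨆ k : ℕ, ⨆ j, ((((-(tfact k) : ℝ) : EReal) + (mpPow A k i j + z j))) := iSup_comm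
    _ = _ := iSup_congr fun k => (ereal_add_iSup_fin _ _).symm

private lemma mexp_mulVec_ge_self (A : Matrix (Fin n) (Fin n) EReal) (z : Fin n → EReal)
    (i : Fin n) : z i ≤ mpMulVec (mexp A) z i := by
  rw [mexp_mulVec]
  refine le_iSup_of_le 0 ?_
  rw [show mpPow A 0 = mpId from rfl, mpMulVec_id, tfact_zero]
  simp

private lemma mexp_mulVec_ge_A (A : Matrix (Fin n) (Fin n) EReal) (z : Fin n → EReal)
    (i : Fin n) : ((-1 : ℝ) : EReal) + mpMulVec A z i ≤ mpMulVec (mexp A) z i := by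
  rw [mexp_mulVec]
  refine le_iSup_of_le 1 ?_
  rw [mpPow_one, tfact_one]

private lemma mpMul_ne_top {A B : Matrix (Fin n) (Fin n) EReal}
    (hA : ∀ i j, A i j ≠ ⊤) (hB : ∀ i j, B i j ≠ ⊤) : ∀ i j, mpMul A B i j ≠ ⊤ := by
  intro i j
  exact ereal_fin_sup_ne_top _ fun k => (EReal.add_lt_top (hA i k) (hB k j)).ne

private lemma mpPow_ne_top {A : Matrix (Fin n) (Fin n) EReal}
    (hA : ∀ i j, A i j ≠ ⊤) (k : ℕ) : ∀ i j, mpPow A k i j ≠ ⊤ := by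
  induction k with
  | zero =>
    intro i j; unfold mpPow mpId
    split <;> simp
  | succ k ih => exact mpMul_ne_top ih hA

private lemma mpPowVec_ne_top {A : Matrix (Fin n) (Fin n) EReal}
    (hA : ∀ i j, A i j ≠ ⊤) {x : Fin n → EReal} (hx : ∀ i, x i ≠ ⊤) (k : ℕ) :
    ∀ i, mpMulVec (mpPow A k) x i ≠ ⊤ := fun i =>
  ereal_fin_sup_ne_top _ fun j => (EReal.add_lt_top (mpPow_ne_top hA k i j) (hx j)).ne

end MP
section MAIN
variable {n : ℕ}

private lemma ereal_le_of_add_coe_le {a b : EReal} {c : ℝ} (h : a + (c : EReal) ≤ b + (c : EReal)) :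
    a ≤ b := by
  have h2 := add_le_add_left h ((-c : ℝ) : EReal)
  rwa [ereal_add_right_cancel, ereal_add_right_cancel] at h2

private lemma escalar_bdd (μ : ℝ) : BddAbove (Set.range fun k : ℕ => (k : ℝ) * μ - tfact k) := by
  refine ⟨μ ^ 2 / 2, ?_⟩
  rintro _ ⟨k, rfl⟩
  have h0 : (0 : ℝ) ≤ (k : ℝ) := Nat.cast_nonneg k
  have h1 := sq_nonneg ((k : ℝ) - μ)
  simp only [tfact]
  nlinarith

private lemma escalar_ge (μ : ℝ) (k : ℕ) : (k : ℝ) * μ - tfact k ≤ Escalar μ :=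
  le_ciSup (escalar_bdd μ) k

private lemma escalar_coe (μ : ℝ) :
    (⨆ k : ℕ, (((k : ℝ) * μ - tfact k : ℝ) : EReal)) = ((Escalar μ : ℝ) : EReal) :=
  ereal_coe_iSup_of_bdd _ (escalar_bdd μ)

/-- key expansion step for the invariant. -/
private lemma mp_inv_step (A : Matrix (Fin n) (Fin n) EReal) (x : Fin n → EReal)
    (c : ℕ → EReal) (i : Fin n) :
    mpMulVec (mexp A) (fun j => ⨆ k : ℕ, (c k + mpMulVec (mpPow A k) x j)) i
      = ⨆ t : ℕ, ((⨆ p : {p : ℕ × ℕ // p.1 + p.2 = t},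
          (((-(tfact p.1.1) : ℝ) : EReal) + c p.1.2)) + mpMulVec (mpPow A t) x i) := by
  have inner2 : ∀ m : ℕ, mpMulVec (mpPow A m) (fun j => ⨆ k : ℕ, (c k + mpMulVec (mpPow A k) x j)) i
      = ⨆ k : ℕ, (c k + mpMulVec (mpPow A (m + k)) x i) := by
    intro m
    calc mpMulVec (mpPow A m) (fun j => ⨆ k : ℕ, (c k + mpMulVec (mpPow A k) x j)) i
        = ⨆ j, (mpPow A m i j + ⨆ k : ℕ, (c k + mpMulVec (mpPow A k) x j)) := rfl
      _ = ⨆ j, ⨆ k : ℕ, (mpPow A m i j + (c k + mpMulVec (mpPow A k) x j)) :=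
          iSup_congr fun j => ereal_add_iSup _ _
      _ = ⨆ k : ℕ, ⨆ j, (mpPow A m i j + (c k + mpMulVec (mpPow A k) x j)) := iSup_comm
      _ = ⨆ k : ℕ, ⨆ j, (c k + (mpPow A m i j + mpMulVec (mpPow A k) x j)) := by
          exact iSup_congr fun k => iSup_congr fun j => by rw [add_left_comm]
      _ = ⨆ k : ℕ, (c k + ⨆ j, (mpPow A m i j + mpMulVec (mpPow A k) x j)) :=
          iSup_congr fun k => (ereal_add_iSup_fin _ _).symm
      _ = ⨆ k : ℕ, (c k + mpMulVec (mpPow A m) (mpMulVec (mpPow A k) x) i) := rfl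
      _ = ⨆ k : ℕ, (c k + mpMulVec (mpPow A (m + k)) x i) := by
          exact iSup_congr fun k => by rw [mpPowVec_add]
  calc mpMulVec (mexp A) (fun j => ⨆ k : ℕ, (c k + mpMulVec (mpPow A k) x j)) i
      = ⨆ m : ℕ, (((-(tfact m) : ℝ) : EReal) +
          mpMulVec (mpPow A m) (fun j => ⨆ k : ℕ, (c k + mpMulVec (mpPow A k) x j)) i) :=
        mexp_mulVec A _ i
    _ = ⨆ m : ℕ, (((-(tfact m) : ℝ) : EReal) + ⨆ k : ℕ, (c k + mpMulVec (mpPow A (m + k)) x i)) := by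
        exact iSup_congr fun m => by rw [inner2]
    _ = ⨆ m : ℕ, ⨆ k : ℕ, (((-(tfact m) : ℝ) : EReal) + (c k + mpMulVec (mpPow A (m + k)) x i)) :=
        iSup_congr fun m => ereal_add_iSup _ _
    _ = _ := by
        apply le_antisymm
        · apply iSup_le; intro m; apply iSup_le; intro k
          calc ((-(tfact m) : ℝ) : EReal) + (c k + mpMulVec (mpPow A (m + k)) x i)
              = (((-(tfact m) : ℝ) : EReal) + c k) + mpMulVec (mpPow A (m + k)) x i := by
                rw [add_assoc]
            _ ≤ (⨆ p : {p : ℕ × ℕ // p.1 + p.2 = m + k},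
                  (((-(tfact p.1.1) : ℝ) : EReal) + c p.1.2)) + mpMulVec (mpPow A (m + k)) x i :=
                add_le_add_left (le_iSup (fun p : {p : ℕ × ℕ // p.1 + p.2 = m + k} =>
                  (((-(tfact p.1.1) : ℝ) : EReal) + c p.1.2)) ⟨(m, k), rfl⟩) _
            _ ≤ _ := le_iSup (fun t => (⨆ p : {p : ℕ × ℕ // p.1 + p.2 = t},
                  (((-(tfact p.1.1) : ℝ) : EReal) + c p.1.2)) + mpMulVec (mpPow A t) x i) (m + k)
        · apply iSup_le; intro t
          have hne : Nonempty {p : ℕ × ℕ // p.1 + p.2 = t} := ⟨⟨(t, 0), by simp⟩⟩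
          rw [ereal_iSup_add]
          apply iSup_le; intro p
          obtain ⟨⟨m, k⟩, hp⟩ := p
          simp only at hp ⊢
          calc (((-(tfact m) : ℝ) : EReal) + c k) + mpMulVec (mpPow A t) x i
              = ((-(tfact m) : ℝ) : EReal) + (c k + mpMulVec (mpPow A (m + k)) x i) := by
                rw [add_assoc, hp]
            _ ≤ ⨆ k' : ℕ, (((-(tfact m) : ℝ) : EReal) + (c k' + mpMulVec (mpPow A (m + k')) x i)) :=
                le_iSup (fun k' => ((-(tfact m) : ℝ) : EReal) +
                  (c k' + mpMulVec (mpPow A (m + k')) x i)) k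
            _ ≤ _ := le_iSup (fun m' => ⨆ k' : ℕ, (((-(tfact m') : ℝ) : EReal) +
                  (c k' + mpMulVec (mpPow A (m' + k')) x i))) m

end MAIN
section MAIN2
variable {n : ℕ}

private lemma mp_invariant (A : Matrix (Fin n) (Fin n) EReal) (x : Fin n → EReal) (r : ℕ) :
    ∃ c : ℕ → EReal, (∀ k, c k ≤ ((-(k : ℝ) : ℝ) : EReal)) ∧
      ∀ i, mpMulVec (mpPow (mexp A) r) x i = ⨆ k : ℕ, (c k + mpMulVec (mpPow A k) x i) := by
  induction r with
  | zero =>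
    refine ⟨fun k => if k = 0 then (0 : EReal) else ⊥, fun k => ?_, fun i => ?_⟩
    · rcases eq_or_ne k 0 with h | h
      · simp [h]
      · simp [h]
    · have hx0 : mpMulVec (mpPow (mexp A) 0) x i = x i := by
        rw [show mpPow (mexp A) 0 = mpId from rfl, mpMulVec_id]
      have hX0 : mpMulVec (mpPow A 0) x = x := by
        rw [show mpPow A 0 = mpId from rfl, mpMulVec_id]
      rw [hx0]
      apply le_antisymm
      · refine le_iSup_of_le 0 ?_
        show x i ≤ (0 : EReal) + mpMulVec (mpPow A 0) x i
        rw [hX0, zero_add]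
      · apply iSup_le; intro k
        rcases eq_or_ne k 0 with h | h
        · subst h
          show (0 : EReal) + mpMulVec (mpPow A 0) x i ≤ x i
          rw [hX0, zero_add]
        · obtain ⟨m, rfl⟩ := Nat.exists_eq_succ_of_ne_zero h
          show (⊥ : EReal) + mpMulVec (mpPow A (m + 1)) x i ≤ x i
          rw [EReal.bot_add]; exact bot_le
  | succ r ih =>
    obtain ⟨c, hcb, hc⟩ := ih
    refine ⟨fun t => ⨆ p : {p : ℕ × ℕ // p.1 + p.2 = t},
      (((-(tfact p.1.1) : ℝ) : EReal) + c p.1.2), fun t => ?_, fun i => ?_⟩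
    · apply iSup_le
      rintro ⟨⟨m, k⟩, hp⟩
      simp only
      calc ((-(tfact m) : ℝ) : EReal) + c k
          ≤ ((-(tfact m) : ℝ) : EReal) + ((-(k : ℝ) : ℝ) : EReal) := add_le_add_right (hcb k) _
        _ = ((-(tfact m) + -(k : ℝ) : ℝ) : EReal) := (EReal.coe_add _ _).symm
        _ ≤ ((-(t : ℝ) : ℝ) : EReal) := by
            apply EReal.coe_le_coe_iff.2
            have h1 := tfact_ge m
            have h2 : ((m : ℝ) + (k : ℝ)) = (t : ℝ) := by exact_mod_cast congrArg (Nat.cast : ℕ → ℝ) hp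
            linarith
    · have hyr : mpMulVec (mpPow (mexp A) r) x
          = fun j => ⨆ k : ℕ, (c k + mpMulVec (mpPow A k) x j) := funext hc
      rw [mpPowVec_succ', hyr, mp_inv_step]

private lemma mp_lower_bound (A : Matrix (Fin n) (Fin n) EReal) (x : Fin n → EReal) :
    ∀ r : ℕ, ∀ k : ℕ, k ≤ r → ∀ i,
      ((-(k : ℝ) : ℝ) : EReal) + mpMulVec (mpPow A k) x i ≤ mpMulVec (mpPow (mexp A) r) x i := by
  intro r
  induction r with
  | zero =>
    intro k hk i
    have hk0 : k = 0 := Nat.le_zero.1 hk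
    subst hk0
    rw [show mpPow (mexp A) 0 = mpId from rfl, mpMulVec_id,
      show mpPow A 0 = mpId from rfl, mpMulVec_id]
    simp
  | succ r ih =>
    intro k hk i
    rcases Nat.lt_or_ge k (r + 1) with h | h
    · have hk' : k ≤ r := Nat.lt_succ_iff.1 h
      calc ((-(k : ℝ) : ℝ) : EReal) + mpMulVec (mpPow A k) x i
          ≤ mpMulVec (mpPow (mexp A) r) x i := ih k hk' i
        _ ≤ mpMulVec (mexp A) (mpMulVec (mpPow (mexp A) r) x) i := mexp_mulVec_ge_self _ _ i
        _ = mpMulVec (mpPow (mexp A) (r + 1)) x i := by rw [mpPowVec_succ']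
    · have hk1 : k = r + 1 := le_antisymm hk h
      subst hk1
      have hmono := mpMulVec_mono (A := A)
        (u := fun j => ((-(r : ℝ) : ℝ) : EReal) + mpMulVec (mpPow A r) x j)
        (w := mpMulVec (mpPow (mexp A) r) x) (fun j => ih r le_rfl j) i
      have hcast : ((-((r + 1 : ℕ) : ℝ) : ℝ) : EReal) = ((-((r : ℝ) + 1) : ℝ) : EReal) := by
        push_cast; ring_nf
      rw [hcast]
      calc ((-((r : ℝ) + 1) : ℝ) : EReal) + mpMulVec (mpPow A (r + 1)) x i
          = ((-1 : ℝ) : EReal) + (((-(r : ℝ) : ℝ) : EReal) + mpMulVec (mpPow A (r + 1)) x i) := by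
            rw [← add_assoc, ← EReal.coe_add]
            norm_num
        _ = ((-1 : ℝ) : EReal) + (((-(r : ℝ) : ℝ) : EReal) +
              mpMulVec A (mpMulVec (mpPow A r) x) i) := by rw [mpPowVec_succ']
        _ = ((-1 : ℝ) : EReal) +
              mpMulVec A (fun j => ((-(r : ℝ) : ℝ) : EReal) + mpMulVec (mpPow A r) x j) i := by
            rw [mpMulVec_smul]
        _ ≤ ((-1 : ℝ) : EReal) + mpMulVec A (mpMulVec (mpPow (mexp A) r) x) i :=
            add_le_add_right hmono _
        _ ≤ mpMulVec (mexp A) (mpMulVec (mpPow (mexp A) r) x) i := mexp_mulVec_ge_A _ _ i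
        _ = mpMulVec (mpPow (mexp A) (r + 1)) x i := by rw [mpPowVec_succ']

end MAIN2
section MAIN3
variable {n : ℕ}

private lemma mp_eig_shift (A : Matrix (Fin n) (Fin n) EReal) (x : Fin n → EReal)
    (r₀ : ℕ) (μ : ℝ)
    (heig : mpMulVec A (mpMulVec (mpPow A r₀) x)
      = fun i => (μ : EReal) + mpMulVec (mpPow A r₀) x i) :
    ∀ m : ℕ, mpMulVec (mpPow A (r₀ + m)) x
      = fun i => (((m : ℝ) * μ : ℝ) : EReal) + mpMulVec (mpPow A r₀) x i := by
  intro m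
  induction m with
  | zero =>
    funext i
    show mpMulVec (mpPow A (r₀ + 0)) x i = _
    norm_num
  | succ m ih =>
    funext i
    calc mpMulVec (mpPow A (r₀ + (m + 1))) x i
        = mpMulVec A (mpMulVec (mpPow A (r₀ + m)) x) i := by
          rw [show r₀ + (m + 1) = (r₀ + m) + 1 from rfl, mpPowVec_succ']
      _ = mpMulVec A (fun j => (((m : ℝ) * μ : ℝ) : EReal) + mpMulVec (mpPow A r₀) x j) i := by
          rw [ih]
      _ = (((m : ℝ) * μ : ℝ) : EReal) + mpMulVec A (mpMulVec (mpPow A r₀) x) i :=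
          mpMulVec_smul _ _ _ i
      _ = (((m : ℝ) * μ : ℝ) : EReal) + ((μ : EReal) + mpMulVec (mpPow A r₀) x i) := by
          rw [heig]
      _ = ((((m + 1 : ℕ) : ℝ) * μ : ℝ) : EReal) + mpMulVec (mpPow A r₀) x i := by
          rw [← add_assoc, ← EReal.coe_add]
          congr 1
          apply EReal.coe_eq_coe_iff.2
          push_cast
          ring

private lemma mp_split (A : Matrix (Fin n) (Fin n) EReal) (x : Fin n → EReal)
    (r₀ : ℕ) (μ : ℝ)
    (heig : mpMulVec A (mpMulVec (mpPow A r₀) x)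
      = fun i => (μ : EReal) + mpMulVec (mpPow A r₀) x i)
    (c : ℕ → EReal) (i : Fin n) :
    (⨆ k : ℕ, (c k + mpMulVec (mpPow A k) x i))
      = (⨆ s : Fin r₀, (c (s : ℕ) + mpMulVec (mpPow A (s : ℕ)) x i)) ⊔
        ((⨆ m : ℕ, (c (r₀ + m) + (((m : ℝ) * μ : ℝ) : EReal))) + mpMulVec (mpPow A r₀) x i) := by
  have hshift := mp_eig_shift A x r₀ μ heig
  have eq1 : (⨆ m : ℕ, (c (r₀ + m) + (((m : ℝ) * μ : ℝ) : EReal))) + mpMulVec (mpPow A r₀) x i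
      = ⨆ m : ℕ, (c (r₀ + m) + mpMulVec (mpPow A (r₀ + m)) x i) := by
    rw [ereal_iSup_add]
    refine iSup_congr fun m => ?_
    rw [add_assoc, hshift m]
  rw [eq1]
  apply le_antisymm
  · apply iSup_le; intro k
    rcases Nat.lt_or_ge k r₀ with h | h
    · exact le_sup_of_le_left (le_iSup (fun s : Fin r₀ =>
        c (s : ℕ) + mpMulVec (mpPow A (s : ℕ)) x i) ⟨k, h⟩)
    · obtain ⟨m, rfl⟩ := Nat.exists_eq_add_of_le h
      exact le_sup_of_le_right (le_iSup (fun m =>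
        c (r₀ + m) + mpMulVec (mpPow A (r₀ + m)) x i) m)
  · apply sup_le
    · exact iSup_le fun s => le_iSup (fun k => c k + mpMulVec (mpPow A k) x i) (s : ℕ)
    · exact iSup_le fun m => le_iSup (fun k => c k + mpMulVec (mpPow A k) x i) (r₀ + m)

end MAIN3
theorem stmt_12 {n : ℕ} (A : Matrix (Fin n) (Fin n) EReal)
    (hA : ∀ i j, A i j ≠ ⊤)
    (hstr : ∀ k : ℕ, 1 ≤ k → mpIrreducible (mpPow A k))
    (hrob : mpRobust A) :
    mpRobust (mexp A) := by
  intro x hxT hxB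
  rcases Nat.eq_zero_or_pos n with hn0 | hn
  · exfalso
    apply hxB
    funext i
    exact absurd i.isLt (by omega)
  have hnefin : Nonempty (Fin n) := ⟨⟨0, hn⟩⟩
  obtain ⟨r₀, μ, hvne, heig⟩ := hrob x hxT hxB
  obtain ⟨i₀, hvi₀⟩ : ∃ i, mpMulVec (mpPow A r₀) x i ≠ ⊥ := by
    by_contra hcon
    push_neg at hcon
    exact hvne (funext hcon)
  rcases le_or_gt μ 1 with hμ | hμ
  · -- case μ ≤ 1 : take r = r₀, lam = 0
    refine ⟨r₀, 0, ?_, ?_⟩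
    · intro hbot
      have h1 := mp_lower_bound A x r₀ r₀ le_rfl i₀
      rw [hbot] at h1
      have h2 : ((-(r₀ : ℝ) : ℝ) : EReal) + mpMulVec (mpPow A r₀) x i₀ = ⊥ := le_bot_iff.1 h1
      rcases EReal.add_eq_bot_iff.1 h2 with h3 | h3
      · exact (EReal.coe_ne_bot _) h3
      · exact hvi₀ h3
    · have hupper : ∀ i, mpMulVec (mpPow (mexp A) (r₀ + 1)) x i
          ≤ mpMulVec (mpPow (mexp A) r₀) x i := by
        intro i
        obtain ⟨c, hcb, hc⟩ := mp_invariant A x (r₀ + 1)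
        rw [hc i, mp_split A x r₀ μ heig c i]
        apply sup_le
        · apply iSup_le; intro s
          calc c (s : ℕ) + mpMulVec (mpPow A (s : ℕ)) x i
              ≤ ((-((s : ℕ) : ℝ) : ℝ) : EReal) + mpMulVec (mpPow A (s : ℕ)) x i :=
                add_le_add_left (hcb (s : ℕ)) _
            _ ≤ _ := mp_lower_bound A x r₀ (s : ℕ) (le_of_lt s.isLt) i
        · have hd : (⨆ m : ℕ, (c (r₀ + m) + (((m : ℝ) * μ : ℝ) : EReal)))
              ≤ ((-(r₀ : ℝ) : ℝ) : EReal) := by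
            apply iSup_le; intro m
            calc c (r₀ + m) + (((m : ℝ) * μ : ℝ) : EReal)
                ≤ ((-((r₀ + m : ℕ) : ℝ) : ℝ) : EReal) + (((m : ℝ) * μ : ℝ) : EReal) :=
                  add_le_add_left (hcb (r₀ + m)) _
              _ = ((-((r₀ + m : ℕ) : ℝ) + (m : ℝ) * μ : ℝ) : EReal) := (EReal.coe_add _ _).symm
              _ ≤ ((-(r₀ : ℝ) : ℝ) : EReal) := by
                  apply EReal.coe_le_coe_iff.2
                  push_cast
                  nlinarith [Nat.cast_nonneg (α := ℝ) m]
          calc (⨆ m : ℕ, (c (r₀ + m) + (((m : ℝ) * μ : ℝ) : EReal))) + mpMulVec (mpPow A r₀) x i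
              ≤ ((-(r₀ : ℝ) : ℝ) : EReal) + mpMulVec (mpPow A r₀) x i := add_le_add_left hd _
            _ ≤ _ := mp_lower_bound A x r₀ r₀ le_rfl i
      funext i
      have hle : mpMulVec (mexp A) (mpMulVec (mpPow (mexp A) r₀) x) i
          ≤ mpMulVec (mpPow (mexp A) r₀) x i := by
        have h5 := hupper i
        rwa [mpPowVec_succ'] at h5
      have heq := le_antisymm hle (mexp_mulVec_ge_self A _ i)
      rw [heq, EReal.coe_zero, zero_add]
  · -- case μ > 1 : the orbit eventually aligns with the eigenvector v
    have hvT : ∀ i, mpMulVec (mpPow A r₀) x i ≠ ⊤ := mpPowVec_ne_top hA hxT r₀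
    have hprop : ∀ a b, A a b ≠ ⊥ → mpMulVec (mpPow A r₀) x b ≠ ⊥ →
        mpMulVec (mpPow A r₀) x a ≠ ⊥ := by
      intro a b hab hvb hva
      have h1 : A a b + mpMulVec (mpPow A r₀) x b ≤ mpMulVec A (mpMulVec (mpPow A r₀) x) a :=
        le_iSup (fun j => A a j + mpMulVec (mpPow A r₀) x j) b
      rw [congrFun heig a, hva, EReal.add_bot] at h1
      rcases EReal.add_eq_bot_iff.1 (le_bot_iff.1 h1) with h3 | h3
      · exact hab h3
      · exact hvb h3
    have hvB : ∀ i, mpMulVec (mpPow A r₀) x i ≠ ⊥ := by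
      have hirr : mpIrreducible A := by
        have h := hstr 1 le_rfl
        rwa [mpPow_one] at h
      intro i
      exact Relation.TransGen.head_induction_on (hirr i i₀)
        (fun {a} h => hprop a i₀ h hvi₀)
        (fun {a c} h' _ ih => hprop a c h' ih)
    set w : Fin n → ℝ := fun i => (mpMulVec (mpPow A r₀) x i).toReal with hwdef
    have hw : ∀ i, mpMulVec (mpPow A r₀) x i = ((w i : ℝ) : EReal) :=
      fun i => (EReal.coe_toReal (hvT i) (hvB i)).symm
    obtain ⟨i₁, hi₁⟩ := Finite.exists_min w
    obtain ⟨C, hC⟩ := ereal_exists_real_bound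
      (fun p : Fin r₀ × Fin n => mpMulVec (mpPow A (p.1 : ℕ)) x p.2) (fun p => mpPowVec_ne_top hA hxT _ _)
    -- eigen equation for mexp A on v
    have hBv : mpMulVec (mexp A) (mpMulVec (mpPow A r₀) x)
        = fun i => ((Escalar μ : ℝ) : EReal) + mpMulVec (mpPow A r₀) x i := by
      funext i
      rw [mexp_mulVec]
      calc ⨆ k : ℕ, (((-(tfact k) : ℝ) : EReal) + mpMulVec (mpPow A k) (mpMulVec (mpPow A r₀) x) i)
          = ⨆ k : ℕ, (((-(tfact k) : ℝ) : EReal) + mpMulVec (mpPow A (k + r₀)) x i) := by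
            refine iSup_congr fun k => ?_
            rw [mpPowVec_add A k r₀ x]
        _ = ⨆ k : ℕ, (((-(tfact k) : ℝ) : EReal) +
              ((((k : ℝ) * μ : ℝ) : EReal) + mpMulVec (mpPow A r₀) x i)) := by
            refine iSup_congr fun k => ?_
            rw [show k + r₀ = r₀ + k from Nat.add_comm k r₀, mp_eig_shift A x r₀ μ heig k]
        _ = ⨆ k : ℕ, ((((k : ℝ) * μ - tfact k : ℝ) : EReal) + mpMulVec (mpPow A r₀) x i) := by
            refine iSup_congr fun k => ?_
            rw [← add_assoc, ← EReal.coe_add]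
            congr 2
            ring
        _ = (⨆ k : ℕ, (((k : ℝ) * μ - tfact k : ℝ) : EReal)) + mpMulVec (mpPow A r₀) x i :=
            (ereal_iSup_add _ _).symm
        _ = _ := by rw [escalar_coe]
    -- upper bound for the orbit
    have hf : ∀ i, x i ≤ ((if x i = ⊥ then (0 : ℝ) else (x i).toReal - w i : ℝ) : EReal) +
        mpMulVec (mpPow A r₀) x i := by
      intro i
      rcases eq_or_ne (x i) ⊥ with h | h
      · rw [h]; exact bot_le
      · rw [if_neg h, hw i, ← EReal.coe_add]
        have hxi : x i = ((x i).toReal : EReal) := (EReal.coe_toReal (hxT i) h).symm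
        conv_lhs => rw [hxi]
        apply EReal.coe_le_coe_iff.2
        linarith
    obtain ⟨imax, himax⟩ := Finite.exists_max (fun i => if x i = ⊥ then (0 : ℝ) else (x i).toReal - w i)
    set D : ℝ := if x imax = ⊥ then (0 : ℝ) else (x imax).toReal - w imax with hDdef
    have hD : ∀ i, x i ≤ ((D : ℝ) : EReal) + mpMulVec (mpPow A r₀) x i := fun i =>
      (hf i).trans (add_le_add_left (EReal.coe_le_coe_iff.2 (himax i)) _)
    have hUB : ∀ r : ℕ, ∀ i, mpMulVec (mpPow (mexp A) r) x i
        ≤ ((D + r * Escalar μ : ℝ) : EReal) + mpMulVec (mpPow A r₀) x i := by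
      intro r
      induction r with
      | zero =>
        intro i
        calc mpMulVec (mpPow (mexp A) 0) x i = x i := by
              rw [show mpPow (mexp A) 0 = mpId from rfl, mpMulVec_id]
          _ ≤ ((D : ℝ) : EReal) + mpMulVec (mpPow A r₀) x i := hD i
          _ = ((D + (0 : ℕ) * Escalar μ : ℝ) : EReal) + mpMulVec (mpPow A r₀) x i := by norm_num
      | succ r ih =>
        intro i
        calc mpMulVec (mpPow (mexp A) (r + 1)) x i
            = mpMulVec (mexp A) (mpMulVec (mpPow (mexp A) r) x) i := by rw [mpPowVec_succ']
          _ ≤ mpMulVec (mexp A)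
              (fun j => ((D + r * Escalar μ : ℝ) : EReal) + mpMulVec (mpPow A r₀) x j) i :=
              mpMulVec_mono (fun j => ih j) i
          _ = ((D + r * Escalar μ : ℝ) : EReal) +
              mpMulVec (mexp A) (mpMulVec (mpPow A r₀) x) i := mpMulVec_smul _ _ _ i
          _ = ((D + r * Escalar μ : ℝ) : EReal) +
              (((Escalar μ : ℝ) : EReal) + mpMulVec (mpPow A r₀) x i) := by rw [hBv]
          _ = ((D + (r + 1 : ℕ) * Escalar μ : ℝ) : EReal) + mpMulVec (mpPow A r₀) x i := by
              rw [← add_assoc, ← EReal.coe_add]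
              congr 2
              push_cast
              ring
    -- lower bound along the eigen direction
    have hLBv : ∀ m : ℕ, ∀ i, ((-(r₀ : ℝ) + m * (μ - 1) : ℝ) : EReal) + mpMulVec (mpPow A r₀) x i
        ≤ mpMulVec (mpPow (mexp A) (r₀ + m)) x i := by
      intro m
      induction m with
      | zero =>
        intro i
        have h0 : ((-(r₀ : ℝ) + (0 : ℕ) * (μ - 1) : ℝ) : EReal) = ((-(r₀ : ℝ) : ℝ) : EReal) := by
          norm_num
        rw [h0]
        exact mp_lower_bound A x r₀ r₀ le_rfl i
      | succ m ih =>
        intro i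
        have h2 := mpMulVec_mono (A := A) (fun j => ih j) i
        have hc3 : ((-(r₀ : ℝ) + (m + 1 : ℕ) * (μ - 1) : ℝ) : EReal)
            = ((-1 : ℝ) : EReal) + (((-(r₀ : ℝ) + m * (μ - 1) : ℝ) : EReal) + ((μ : ℝ) : EReal)) := by
          rw [← EReal.coe_add, ← EReal.coe_add]
          congr 1
          push_cast
          ring
        calc ((-(r₀ : ℝ) + (m + 1 : ℕ) * (μ - 1) : ℝ) : EReal) + mpMulVec (mpPow A r₀) x i
            = ((-1 : ℝ) : EReal) + (((-(r₀ : ℝ) + m * (μ - 1) : ℝ) : EReal) +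
                (((μ : ℝ) : EReal) + mpMulVec (mpPow A r₀) x i)) := by
              rw [hc3, add_assoc, add_assoc]
          _ = ((-1 : ℝ) : EReal) + (((-(r₀ : ℝ) + m * (μ - 1) : ℝ) : EReal) +
                mpMulVec A (mpMulVec (mpPow A r₀) x) i) := by rw [congrFun heig i]
          _ = ((-1 : ℝ) : EReal) + mpMulVec A
                (fun j => ((-(r₀ : ℝ) + m * (μ - 1) : ℝ) : EReal) + mpMulVec (mpPow A r₀) x j) i := by
              rw [mpMulVec_smul]
          _ ≤ ((-1 : ℝ) : EReal) + mpMulVec A (mpMulVec (mpPow (mexp A) (r₀ + m)) x) i :=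
              add_le_add_right h2 _
          _ ≤ mpMulVec (mexp A) (mpMulVec (mpPow (mexp A) (r₀ + m)) x) i := mexp_mulVec_ge_A _ _ i
          _ = mpMulVec (mpPow (mexp A) (r₀ + m + 1)) x i := by rw [mpPowVec_succ']
    -- choose m large enough
    have hμ1 : (0 : ℝ) < μ - 1 := by linarith
    obtain ⟨m, hm⟩ := exists_nat_gt ((C - w i₁ + 1 + r₀) / (μ - 1))
    have hgm : C - w i₁ + 1 + r₀ < m * (μ - 1) := by
      rw [div_lt_iff₀ hμ1] at hm
      linarith
    obtain ⟨c, hcb, hc⟩ := mp_invariant A x (r₀ + m)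
    have hsplit : ∀ i, mpMulVec (mpPow (mexp A) (r₀ + m)) x i
        = (⨆ s : Fin r₀, (c (s : ℕ) + mpMulVec (mpPow A (s : ℕ)) x i)) ⊔
          ((⨆ m' : ℕ, (c (r₀ + m') + (((m' : ℝ) * μ : ℝ) : EReal))) + mpMulVec (mpPow A r₀) x i) := by
      intro i
      rw [hc i]
      exact mp_split A x r₀ μ heig c i
    have hjunk : ∀ i, (⨆ s : Fin r₀, (c (s : ℕ) + mpMulVec (mpPow A (s : ℕ)) x i)) ≤ ((C : ℝ) : EReal) := by
      intro i
      apply iSup_le; intro s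
      calc c (s : ℕ) + mpMulVec (mpPow A (s : ℕ)) x i
          ≤ ((-((s : ℕ) : ℝ) : ℝ) : EReal) + ((C : ℝ) : EReal) :=
            add_le_add (hcb (s : ℕ)) (hC (s, i))
        _ = ((-((s : ℕ) : ℝ) + C : ℝ) : EReal) := (EReal.coe_add _ _).symm
        _ ≤ ((C : ℝ) : EReal) := by
            apply EReal.coe_le_coe_iff.2
            have : (0 : ℝ) ≤ ((s : ℕ) : ℝ) := Nat.cast_nonneg _
            linarith
    have heqd : ∀ i, mpMulVec (mpPow (mexp A) (r₀ + m)) x i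
        = (⨆ m' : ℕ, (c (r₀ + m') + (((m' : ℝ) * μ : ℝ) : EReal))) + mpMulVec (mpPow A r₀) x i := by
      intro i
      have h1 := hLBv m i
      have h2 : (⨆ s : Fin r₀, (c (s : ℕ) + mpMulVec (mpPow A (s : ℕ)) x i))
          < ((-(r₀ : ℝ) + m * (μ - 1) : ℝ) : EReal) + mpMulVec (mpPow A r₀) x i := by
        refine lt_of_le_of_lt (hjunk i) ?_
        rw [hw i, ← EReal.coe_add]
        apply EReal.coe_lt_coe_iff.2
        have := hi₁ i
        linarith
      rcases le_total ((⨆ m' : ℕ, (c (r₀ + m') + (((m' : ℝ) * μ : ℝ) : EReal))) +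
          mpMulVec (mpPow A r₀) x i)
          (⨆ s : Fin r₀, (c (s : ℕ) + mpMulVec (mpPow A (s : ℕ)) x i)) with h4 | h4
      · exfalso
        have h5 : mpMulVec (mpPow (mexp A) (r₀ + m)) x i
            = (⨆ s : Fin r₀, (c (s : ℕ) + mpMulVec (mpPow A (s : ℕ)) x i)) := by
          rw [hsplit i]
          exact sup_eq_left.2 h4
        rw [h5] at h1
        exact absurd (h2.trans_le h1) (lt_irrefl _)
      · rw [hsplit i]
        exact sup_eq_right.2 h4
    set d : EReal := ⨆ m' : ℕ, (c (r₀ + m') + (((m' : ℝ) * μ : ℝ) : EReal)) with hddef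
    have hd_lb : ((-(r₀ : ℝ) + m * (μ - 1) : ℝ) : EReal) ≤ d := by
      have h1 := hLBv m i₁
      rw [heqd i₁] at h1
      rw [hw i₁] at h1
      exact ereal_le_of_add_coe_le h1
    have hd_ub : d ≤ ((D + (r₀ + m : ℕ) * Escalar μ : ℝ) : EReal) := by
      have h1 := hUB (r₀ + m) i₁
      rw [heqd i₁] at h1
      rw [hw i₁] at h1
      exact ereal_le_of_add_coe_le h1
    have hd_bot : d ≠ ⊥ := fun h => (EReal.coe_ne_bot _) (le_bot_iff.1 (h ▸ hd_lb))
    have hd_top : d ≠ ⊤ := ne_top_of_le_ne_top (EReal.coe_ne_top _) hd_ub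
    refine ⟨r₀ + m, Escalar μ, ?_, ?_⟩
    · intro hbot
      have h1 := congrFun hbot i₁
      rw [heqd i₁, hw i₁] at h1
      rcases EReal.add_eq_bot_iff.1 h1 with h3 | h3
      · exact hd_bot h3
      · exact (EReal.coe_ne_bot _) h3
    · have hyfun : mpMulVec (mpPow (mexp A) (r₀ + m)) x
          = fun j => d + mpMulVec (mpPow A r₀) x j := funext heqd
      funext i
      calc mpMulVec (mexp A) (mpMulVec (mpPow (mexp A) (r₀ + m)) x) i
          = mpMulVec (mexp A) (fun j => d + mpMulVec (mpPow A r₀) x j) i := by rw [hyfun]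
        _ = d + mpMulVec (mexp A) (mpMulVec (mpPow A r₀) x) i := mpMulVec_smul _ _ _ i
        _ = d + (((Escalar μ : ℝ) : EReal) + mpMulVec (mpPow A r₀) x i) := by rw [hBv]
        _ = ((Escalar μ : ℝ) : EReal) + (d + mpMulVec (mpPow A r₀) x i) := by rw [add_left_comm]
        _ = ((Escalar μ : ℝ) : EReal) + mpMulVec (mpPow (mexp A) (r₀ + m)) x i := by rw [heqd i]

end
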